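/- arXiv:1812.01864 — 2 statements merged into one kernel-verified Lean document; each statement's English description precedes it below -/
import Mathlib

section
/- For every n ≥ 0, the identity ∑_{λ ⊢ n} F_λ · s_λ = h_1^n holds in the ring of symmetric functions, where F_λ is the number of standard Young tableaux of shape λ. -/
open scoped BigOperators

noncomputable section

namespace WAPpr

/-- A partition, represented as a finitely supported function `ℕ →₀ ℕ`
(0-indexed: `lam i` is the `(i+1)`-st part). -/
abbrev Ptn := ℕ →₀ ℕ

/-- `f` is a genuine partition: the parts are weakly decreasing. -/
def IsPtn (f : Ptn) : Prop := ∀ ⦃i j : ℕ⦄, i ≤ j → f j ≤ f i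

/-- The size `|λ|` of a partition. -/
def psize (f : Ptn) : ℕ := f.sum fun _ m => m

/-- The length (number of nonzero parts) of a partition. -/
def plen (f : Ptn) : ℕ := f.support.card

/-- `λ` covers `μ` in Young's lattice. -/
def Covers (lam mu : Ptn) : Prop :=
  IsPtn lam ∧ IsPtn mu ∧ (∀ i, mu i ≤ lam i) ∧ psize mu + 1 = psize lam

/-- The number of standard Young tableaux of shape `λ`, i.e. of saturated
chains from `∅` to `λ` in Young's lattice. -/
def F (lam : Ptn) : ℕ :=
  Nat.card {T : Fin (psize lam + 1) → Ptn //
    T 0 = 0 ∧ T (Fin.last (psize lam)) = lam ∧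
    ∀ i : Fin (psize lam), Covers (T i.succ) (T i.castSucc)}

/-- `conjF lam j` is the number of parts of `lam` that are `> j`,
i.e. the `(j+1)`-st part of the conjugate partition. -/
def conjF (lam : Ptn) (j : ℕ) : ℕ := (lam.support.filter fun i => j < lam i).card

/-- The cells of the Young diagram of `λ` (0-indexed). -/
def cells (lam : Ptn) : Finset (ℕ × ℕ) :=
  lam.support.biUnion fun i => ({i} : Finset ℕ) ×ˢ Finset.range (lam i)

/-- The hook length of the (0-indexed) cell `(i,j)` of `λ`. -/
def hook (lam : Ptn) (i j : ℕ) : ℕ := lam i + conjF lam j - i - j - 1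

/-- The hook length product `H(λ)`. -/
def hookProd (lam : Ptn) : ℕ := ∏ c ∈ cells lam, hook lam c.1 c.2

/-- The degree vector `n_λ = (λ_r, λ_{r-1}+1, …, λ_1+r-1)` (0-indexed). -/
def degv (lam : Ptn) (i : ℕ) : ℕ := lam (plen lam - 1 - i) + i

/-- The Vandermonde factor `Δ(n_λ) = ∏_{i<j} (n_j - n_i)`. -/
def vand (lam : Ptn) : ℝ :=
  ∏ p ∈ (Finset.range (plen lam) ×ˢ Finset.range (plen lam)).filter
      (fun p => p.1 < p.2),
    ((degv lam p.2 : ℝ) - (degv lam p.1 : ℝ))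

/-- The Wronskian determinant of `r` polynomials. -/
def wronskian (r : ℕ) (f : ℕ → Polynomial ℝ) : Polynomial ℝ :=
  Matrix.det (Matrix.of fun i j : Fin r =>
    (fun q => Polynomial.derivative q)^[(j : ℕ)] (f (i : ℕ)))

/-- The Wronskian Appell polynomial `A_λ = Wr[A_{n_1},…,A_{n_r}] / Δ(n_λ)`. -/
def wap (A : ℕ → Polynomial ℝ) (lam : Ptn) : Polynomial ℝ :=
  (vand lam)⁻¹ • wronskian (plen lam) (fun i => A (degv lam i))

/-- `(A_n)` is an Appell sequence: `A_0 = 1` and `A_n' = n·A_{n-1}`. -/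
def IsAppell (A : ℕ → Polynomial ℝ) : Prop :=
  A 0 = 1 ∧ ∀ n : ℕ, 1 ≤ n → Polynomial.derivative (A n) = n • A (n - 1)

/-- The set of cells of the skew diagram `λ/μ`. -/
def skewSet (lam mu : Ptn) : Set (ℕ × ℕ) := {p | mu p.1 ≤ p.2 ∧ p.2 < lam p.1}

/-- Two cells are adjacent (share an edge). -/
def Adj (p q : ℕ × ℕ) : Prop :=
  (p.1 = q.1 ∧ (p.2 + 1 = q.2 ∨ q.2 + 1 = p.2)) ∨
  (p.2 = q.2 ∧ (p.1 + 1 = q.1 ∨ q.1 + 1 = p.1))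

/-- A set of cells is (edge-)connected. -/
def ConnectedIn (S : Set (ℕ × ℕ)) : Prop :=
  ∀ a b : S, Relation.ReflTransGen (fun x y : S => Adj x.1 y.1) a b

/-- A set of cells contains no 2×2 square. -/
def No2x2 (S : Set (ℕ × ℕ)) : Prop :=
  ¬ ∃ i j : ℕ, (i, j) ∈ S ∧ (i + 1, j) ∈ S ∧ (i, j + 1) ∈ S ∧ (i + 1, j + 1) ∈ S

/-- `λ/μ` is a rim hook of size `k`. -/
def IsRimHook (lam mu : Ptn) (k : ℕ) : Prop :=
  IsPtn lam ∧ IsPtn mu ∧ (∀ i, mu i ≤ lam i) ∧ psize mu + k = psize lam ∧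
  ConnectedIn (skewSet lam mu) ∧ No2x2 (skewSet lam mu)

/-- The height of the rim hook `λ/μ`: one less than the number of rows. -/
def rhHeight (lam mu : Ptn) : ℕ :=
  Nat.card {i : ℕ | ∃ j, (i, j) ∈ skewSet lam mu} - 1

/-! ### Symmetric functions, `h`-model:
`Λ = ℚ[h_1, h_2, …]` with `X m = h_{m+1}`. -/

abbrev SymF := MvPolynomial ℕ ℚ

/-- The complete homogeneous symmetric function `h_m` (as a free generator). -/
def hsym (m : ℕ) : SymF := if m = 0 then 1 else MvPolynomial.X (m - 1)

/-- `h_k` extended to integer indices by `0` for `k < 0`. -/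
def hz (k : ℤ) : SymF := if k < 0 then 0 else hsym k.toNat

/-- The Schur function `s_λ`, via the Jacobi–Trudi formula
`s_λ = det[h_{λ_i - i + j}]`. -/
def schur (lam : Ptn) : SymF :=
  Matrix.det (Matrix.of fun i j : Fin (plen lam) =>
    hz ((lam (i : ℕ) : ℤ) - (i : ℕ) + (j : ℕ)))

/-! ### Symmetric functions, `p`-model:
`Λ_ℚ = ℚ[p_1, p_2, …]` with `X m = p_{m+1}`. -/

/-- The power sum `p_m` (as a free generator; only used for `m ≥ 1`). -/
def psym (m : ℕ) : SymF := MvPolynomial.X (m - 1)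

/-- The complete homogeneous symmetric functions, expressed in the power
sums via the Newton recursion `n h_n = ∑_{k=1}^n p_k h_{n-k}`. -/
def hh : ℕ → SymF
  | 0 => 1
  | (n + 1) => ((n + 1 : ℚ))⁻¹ • ∑ k ∈ Finset.range (n + 1), psym (k + 1) * hh (n - k)
termination_by n => n
decreasing_by exact Nat.lt_succ_of_le (Nat.sub_le _ _)

/-- `hh` extended to integer indices. -/
def hzP (k : ℤ) : SymF := if k < 0 then 0 else hh k.toNat

/-- The Schur function in the `p`-model, via Jacobi–Trudi. -/
def schurP (lam : Ptn) : SymF :=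
  Matrix.det (Matrix.of fun i j : Fin (plen lam) =>
    hzP ((lam (i : ℕ) : ℤ) - (i : ℕ) + (j : ℕ)))

/-- The elementary symmetric functions in the `p`-model: `e_n = ω(h_n)` where
`ω(p_k) = (-1)^{k-1} p_k`. -/
def ee (n : ℕ) : SymF :=
  MvPolynomial.bind₁ (fun m : ℕ => ((-1 : ℚ) ^ m) • MvPolynomial.X m) (hh n)

/-- The exponential of a power series with coefficients in `Λ_ℚ`
(correct for series with zero constant term). -/
def pexp (S : PowerSeries SymF) : PowerSeries SymF :=
  PowerSeries.mk fun n =>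
    ∑ k ∈ Finset.range (n + 1), (k.factorial : ℚ)⁻¹ • (PowerSeries.coeff n (S ^ k))

/-- The exponential of a real power series (correct for series with zero
constant term). -/
def rexp (S : PowerSeries ℝ) : PowerSeries ℝ :=
  PowerSeries.mk fun n =>
    ∑ k ∈ Finset.range (n + 1), (k.factorial : ℝ)⁻¹ * (PowerSeries.coeff n (S ^ k))

/-- The moment exponential generating function `f_A(t) = ∑ A_k(0) t^k/k!`. -/
def fser (A : ℕ → Polynomial ℝ) : PowerSeries ℝ :=
  PowerSeries.mk fun k => (A k).eval 0 / k.factorial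

/-- The column partition `(1^n)`. -/
def colP (n : ℕ) : Ptn :=
  Finsupp.onFinset (Finset.range n) (fun i => if i < n then 1 else 0)
    (by intro a ha; rw [Finset.mem_range]; by_contra h; simp [h] at ha)

/-- The conjugate partition `λ'`. -/
def conjP (lam : Ptn) : Ptn :=
  Finsupp.onFinset (Finset.range (lam.support.sup fun i => lam i))
    (fun j => conjF lam j)
    (by
      intro a ha
      rw [Finset.mem_range]
      obtain ⟨i, hi⟩ := Finset.card_pos.mp (Nat.pos_of_ne_zero ha)
      rw [Finset.mem_filter] at hi
      exact lt_of_lt_of_le hi.2 (Finset.le_sup hi.1))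

end WAPpr

end

/-!
Pieri's rule `h₁ s_μ = ∑_{λ ⋗ μ} s_λ` and the recursion `F_λ = ∑_{μ ⋖ λ} F_μ` (remove the cell
holding the largest entry of a tableau) give the identity by induction on `n`, after exchanging
the two sums.

Pieri's rule is read off the Jacobi–Trudi determinant. Let `G = (h_{μ_i - i + j})` have size
`ℓ(μ) + 1`, so that its last row is a unit vector. Adding a cell in row `k` replaces row `k` of
`G` by row `k` of `G S + C G`, where `S` shifts columns by one and `C` vanishes outside its last
column `(h_{μ_i - i + ℓ(μ) + 1})_i`. Summing over `k`, Jacobi's formula gives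
`(tr S + tr C) det G = h₁ det G`; additions that are not partitions have two equal rows.
-/

namespace Matrix
variable {n R : Type*} [Fintype n] [DecidableEq n] [CommRing R]

theorem sum_det_updateRow (M X : Matrix n n R) :
    ∑ i, (M.updateRow i (X i)).det = (M.adjugate * X).trace := by
  simp only [← cramer_transpose_apply, cramer_eq_adjugate_mulVec, ← adjugate_transpose, trace,
    diag, mul_apply, mulVec, dotProduct, transpose_apply]
  exact Finset.sum_comm

theorem sum_det_updateRow_mul_add_mul (M A B : Matrix n n R) :
    ∑ i, (M.updateRow i ((M * A + B * M) i)).det = (A.trace + B.trace) * M.det := by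
  rw [sum_det_updateRow, Matrix.mul_add, trace_add, ← Matrix.mul_assoc, adjugate_mul,
    trace_mul_comm M.adjugate, Matrix.mul_assoc, mul_adjugate]
  simp only [Matrix.mul_smul, Matrix.smul_mul, Matrix.mul_one, Matrix.one_mul, trace_smul,
    smul_eq_mul]
  ring

end Matrix

noncomputable section

namespace WAPpr

open Finset Matrix
open scoped Classical

lemma psize_add (f g : Ptn) : psize (f + g) = psize f + psize g := map_add Finsupp.degree f g

lemma psize_single (k c : ℕ) : psize (Finsupp.single k c) = c := Finsupp.degree_single k c

lemma plen_le_psize (f : Ptn) : plen f ≤ psize f := by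
  simpa [plen, psize, Finsupp.sum] using card_nsmul_le_sum f.support f 1 fun i hi =>
    Nat.one_le_iff_ne_zero.2 (Finsupp.mem_support_iff.1 hi)

lemma plen_add_single_le (f : Ptn) (k : ℕ) : plen (f + Finsupp.single k 1) ≤ plen f + 1 := by
  unfold plen
  calc #(f + Finsupp.single k 1).support
      ≤ #(f.support ∪ (Finsupp.single k 1).support) := card_le_card Finsupp.support_add
    _ ≤ #f.support + #(Finsupp.single k 1).support := card_union_le _ _
    _ = #f.support + 1 := by rw [Finsupp.support_single _ one_ne_zero, card_singleton]

lemma isPtn_zero : IsPtn 0 := fun _ _ _ => le_rfl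

namespace IsPtn

variable {f : Ptn} (hf : IsPtn f)
include hf

lemma apply_eq_zero_of_plen_le {i : ℕ} (hi : plen f ≤ i) : f i = 0 := by
  by_contra hfi
  have hsub : range (i + 1) ⊆ f.support := fun j hj =>
    Finsupp.mem_support_iff.2 fun hfj =>
      hfi (Nat.eq_zero_of_le_zero (hfj ▸ hf (Nat.lt_succ_iff.1 (mem_range.1 hj))))
  have := card_le_card hsub
  simp only [card_range] at this
  exact absurd hi (by unfold plen; omega)

lemma lt_plen_of_apply_ne_zero {i : ℕ} (hi : f i ≠ 0) : i < plen f :=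
  lt_of_not_ge fun h => hi (hf.apply_eq_zero_of_plen_le h)

lemma add_single_iff {k : ℕ} : IsPtn (f + Finsupp.single k 1) ↔ k = 0 ∨ f k < f (k - 1) := by
  constructor
  · intro h
    refine or_iff_not_imp_left.2 fun hk => ?_
    have := h (Nat.sub_le k 1)
    simp only [Finsupp.add_apply, Finsupp.single_eq_same,
      Finsupp.single_eq_of_ne (show k - 1 ≠ k by omega)] at this
    omega
  · intro hk i j hij
    have := hf hij
    simp only [Finsupp.add_apply, Finsupp.single_apply]
    split_ifs with hi hj hj <;> try omega
    subst hi
    have := hf (show i ≤ k - 1 by omega)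
    omega

lemma le_plen_of_add_single {k : ℕ} (h : IsPtn (f + Finsupp.single k 1)) : k ≤ plen f := by
  by_contra hk
  rcases (hf.add_single_iff).1 h with rfl | hlt
  · omega
  · rw [hf.apply_eq_zero_of_plen_le (by omega : plen f ≤ k - 1)] at hlt
    omega

lemma apply_pred_eq_of_not_add_single {k : ℕ} (h : ¬IsPtn (f + Finsupp.single k 1)) :
    0 < k ∧ f (k - 1) = f k := by
  rw [hf.add_single_iff, not_or, not_lt] at h
  exact ⟨Nat.pos_of_ne_zero h.1, le_antisymm h.2 (hf (Nat.sub_le k 1))⟩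

end IsPtn

lemma Covers.exists_eq_add_single {lam mu : Ptn} (h : Covers lam mu) :
    ∃ k, lam = mu + Finsupp.single k 1 := by
  obtain ⟨-, -, hle, hsize⟩ := h
  have hmu : mu ≤ lam := Finsupp.le_def.2 hle
  have hdeg : (lam - mu).degree = 1 := by
    have := psize_add mu (lam - mu)
    rw [add_tsub_cancel_of_le hmu] at this
    change psize (lam - mu) = 1
    omega
  obtain ⟨k, hk⟩ : lam - mu ∈ Set.range (Finsupp.single · 1) := by
    rwa [Finsupp.range_single_one]
  simp only at hk
  exact ⟨k, by rw [hk, add_tsub_cancel_of_le hmu]⟩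

lemma covers_add_single {mu : Ptn} (hmu : IsPtn mu) {k : ℕ}
    (h : IsPtn (mu + Finsupp.single k 1)) : Covers (mu + Finsupp.single k 1) mu :=
  ⟨h, hmu, fun i => by simp, by rw [psize_add, psize_single]⟩

def partitions (n : ℕ) : Finset Ptn :=
  (finsuppAntidiag (range n) n).filter IsPtn

lemma mem_partitions {n : ℕ} {f : Ptn} : f ∈ partitions n ↔ IsPtn f ∧ psize f = n := by
  rw [partitions, mem_filter, mem_finsuppAntidiag', and_comm, and_congr_right_iff]
  intro hf
  refine ⟨fun h => h.1, fun h => ⟨h, fun i hi => mem_range.2 ?_⟩⟩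
  exact (hf.lt_plen_of_apply_ne_zero (Finsupp.mem_support_iff.1 hi)).trans_le
    (h ▸ plen_le_psize f)

lemma partitions_zero : partitions 0 = {0} := by
  ext f
  rw [mem_partitions, mem_singleton]
  refine ⟨fun h => (Finsupp.degree_eq_zero_iff f).1 h.2, ?_⟩
  rintro rfl
  exact ⟨isPtn_zero, by simp [psize]⟩

lemma hz_natCast (a : ℕ) : hz a = hsym a := by
  simp [hz]

lemma hz_of_neg {k : ℤ} (hk : k < 0) : hz k = 0 := if_pos hk

def jtMatrix (N : ℕ) (mu : Ptn) : Matrix (Fin N) (Fin N) SymF :=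
  Matrix.of fun i j : Fin N => hz ((mu (i : ℕ) : ℤ) - (i : ℕ) + (j : ℕ))

lemma jtMatrix_last_row {m : ℕ} {mu : Ptn} (h : mu m = 0) :
    jtMatrix (m + 1) mu (Fin.last m) = Pi.single (Fin.last m) 1 := by
  ext j : 1
  rcases eq_or_ne j (Fin.last m) with rfl | hj
  · simp [jtMatrix, h, hz, hsym]
  · have := Fin.val_lt_last hj
    rw [Pi.single_eq_of_ne hj]
    exact hz_of_neg (by simp [h]; omega)

lemma det_jtMatrix_succ {N : ℕ} {mu : Ptn} (h : mu N = 0) :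
    (jtMatrix (N + 1) mu).det = (jtMatrix N mu).det := by
  rw [det_succ_row _ (Fin.last N), Fintype.sum_eq_single (Fin.last N), jtMatrix_last_row h]
  · simp only [Pi.single_eq_same, Fin.val_last, Fin.succAbove_last, ← two_mul, pow_mul,
      neg_one_sq, one_pow, one_mul]
    rfl
  · intro j hj
    rw [jtMatrix_last_row h, Pi.single_eq_of_ne hj, mul_zero, zero_mul]

lemma hsym_one_mul_det_jtMatrix {m : ℕ} {mu : Ptn} (h : mu m = 0) :
    hsym 1 * (jtMatrix (m + 1) mu).det =
      ∑ k : Fin (m + 1), (jtMatrix (m + 1) (mu + Finsupp.single (k : ℕ) 1)).det := by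
  set G := jtMatrix (m + 1) mu
  have hG_last : G (Fin.last m) = Pi.single (Fin.last m) 1 := jtMatrix_last_row h
  let S : Matrix (Fin (m + 1)) (Fin (m + 1)) SymF :=
    of fun l j => if (l : ℕ) = j + 1 then 1 else 0
  let C : Matrix (Fin (m + 1)) (Fin (m + 1)) SymF :=
    of fun i l => if l = Fin.last m then hz ((mu i : ℤ) - i + (m + 1)) else 0
  have hS : S.trace = 0 := by simp [S, trace]
  have hC : C.trace = hsym 1 := by
    rw [trace, Fintype.sum_eq_single (Fin.last m)]
    · simp [C, h, ← hz_natCast]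
    · intro i hi
      simp [C, hi]
  have hrow : ∀ k : Fin (m + 1),
      jtMatrix (m + 1) (mu + Finsupp.single (k : ℕ) 1) = G.updateRow k ((G * S + C * G) k) := by
    intro k
    refine Matrix.ext fun i j => ?_
    rcases eq_or_ne i k with rfl | hik
    · rw [updateRow_self, Matrix.add_apply, mul_apply, mul_apply]
      simp only [S, C, of_apply, ite_mul, zero_mul, mul_ite, mul_one, mul_zero]
      have hshift := Fin.sum_univ_eq_sum_range
        (fun l => if l = (j : ℕ) + 1 then hz ((mu i : ℤ) - i + l) else 0) (m + 1)
      rw [Fintype.sum_ite_eq', hG_last]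
      simp only [G, jtMatrix, of_apply]
      rw [hshift, Finset.sum_ite_eq']
      simp only [Finsupp.add_apply, Finsupp.single_eq_same, Nat.cast_add, Nat.cast_one]
      rcases eq_or_ne j (Fin.last m) with rfl | hj
      · rw [if_neg (by simp), Pi.single_eq_same, mul_one, zero_add, Fin.val_last]
        congr 1
        ring
      · have := Fin.val_lt_last hj
        rw [if_pos (by simp; omega), Pi.single_eq_of_ne hj, mul_zero, add_zero]
        congr 1
        ring
    · have hik' : (k : ℕ) ≠ i := fun e => hik (Fin.ext e.symm)
      simp [updateRow_ne hik, G, jtMatrix, Finsupp.single_apply, hik']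
  simp only [hrow, sum_det_updateRow_mul_add_mul, hS, hC, zero_add]

lemma det_jtMatrix_of_plen_le {mu : Ptn} (hmu : IsPtn mu) {N : ℕ} (hN : plen mu ≤ N) :
    (jtMatrix N mu).det = schur mu := by
  induction N, hN using Nat.le_induction with
  | base => rfl
  | succ N hN ih => rw [det_jtMatrix_succ (hmu.apply_eq_zero_of_plen_le hN), ih]

lemma det_jtMatrix_add_single_eq_zero {mu : Ptn} (hmu : IsPtn mu) {N k : ℕ} (hk : k < N)
    (h : ¬IsPtn (mu + Finsupp.single k 1)) :
    (jtMatrix N (mu + Finsupp.single k 1)).det = 0 := by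
  obtain ⟨hk0, hmu_eq⟩ := hmu.apply_pred_eq_of_not_add_single h
  refine det_zero_of_row_eq (i := ⟨k - 1, by omega⟩) (j := ⟨k, hk⟩)
    (by simp [Fin.ext_iff]; omega) (funext fun j => ?_)
  simp only [jtMatrix, of_apply, Finsupp.add_apply, Finsupp.single_eq_same,
    Finsupp.single_eq_of_ne (show k - 1 ≠ k by omega), add_zero, hmu_eq]
  congr 1
  push_cast [Nat.cast_sub (show 1 ≤ k by omega)]
  ring

theorem hsym_one_mul_schur {mu : Ptn} (hmu : IsPtn mu) :
    hsym 1 * schur mu =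
      ∑ lam ∈ (partitions (psize mu + 1)).filter (Covers · mu), schur lam := by
  calc hsym 1 * schur mu = hsym 1 * (jtMatrix (plen mu + 1) mu).det := by
        rw [det_jtMatrix_of_plen_le hmu (Nat.le_succ _)]
    _ = ∑ k ∈ range (plen mu + 1), (jtMatrix (plen mu + 1) (mu + Finsupp.single k 1)).det := by
        rw [hsym_one_mul_det_jtMatrix (hmu.apply_eq_zero_of_plen_le le_rfl),
          Fin.sum_univ_eq_sum_range (fun k => (jtMatrix _ (mu + Finsupp.single k 1)).det)]
    _ = ∑ k ∈ (range (plen mu + 1)).filter (fun k => IsPtn (mu + Finsupp.single k 1)),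
          schur (mu + Finsupp.single k 1) := by
        rw [sum_filter]
        refine sum_congr rfl fun k hk => ?_
        split_ifs with h
        · exact det_jtMatrix_of_plen_le h (plen_add_single_le mu k)
        · exact det_jtMatrix_add_single_eq_zero hmu (mem_range.1 hk) h
    _ = ∑ lam ∈ (partitions (psize mu + 1)).filter (Covers · mu), schur lam := by
        refine sum_nbij (fun k => mu + Finsupp.single k 1) (fun k hk => ?_)
          (fun k _ l _ hkl => Finsupp.single_left_injective one_ne_zero (add_left_cancel hkl))
          (fun lam hlam => ?_) (fun _ _ => rfl)
        · have h := (mem_filter.1 hk).2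
          exact mem_filter.2 ⟨mem_partitions.2 ⟨h, by rw [psize_add, psize_single]⟩,
            covers_add_single hmu h⟩
        · have hcov := (mem_filter.1 hlam).2
          obtain ⟨k, rfl⟩ := hcov.exists_eq_add_single
          exact ⟨k, mem_filter.2 ⟨mem_range.2 (Nat.lt_succ_of_le (hmu.le_plen_of_add_single
            hcov.1)), hcov.1⟩, rfl⟩

section RelChain

variable {α : Type*} (r : α → α → Prop)

abbrev RelChain (a : α) (n : ℕ) (b : α) : Type _ :=
  {T : Fin (n + 1) → α // T 0 = a ∧ T (Fin.last n) = b ∧ ∀ i : Fin n, r (T i.succ) (T i.castSucc)}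

def relChainSuccEquiv (a : α) (n : ℕ) (b : α) :
    RelChain r a (n + 1) b ≃ Σ c : {c // r b c}, RelChain r a n c where
  toFun T := ⟨⟨T.1 (Fin.last n).castSucc, by simpa [T.2.2.1] using T.2.2.2 (Fin.last n)⟩,
    ⟨Fin.init T.1, T.2.1, rfl, fun i => by simpa [Fin.init] using T.2.2.2 i.castSucc⟩⟩
  invFun p := ⟨Fin.snoc p.2.1 b, by simpa using p.2.2.1, by simp, fun i => by
    refine Fin.lastCases ?_ (fun j => ?_) i
    · simpa [p.2.2.2.1] using p.1.2
    · rw [Fin.succ_castSucc, Fin.snoc_castSucc, Fin.snoc_castSucc]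
      exact p.2.2.2.2 j⟩
  left_inv T := Subtype.ext (by simpa [T.2.2.1] using Fin.snoc_init_self T.1)
  right_inv p := Sigma.subtype_ext (Subtype.ext (by simp [p.2.2.2.1])) (by simp)

instance (a b : α) : Subsingleton (RelChain r a 0 b) :=
  ⟨fun T T' => Subtype.ext <| funext fun i => by
    rw [Subsingleton.elim (α := Fin 1) i 0, T.2.1, T'.2.1]⟩

lemma card_relChain_zero_self (a : α) : Nat.card (RelChain r a 0 a) = 1 :=
  Nat.card_eq_one_iff_unique.2 ⟨inferInstance, ⟨⟨fun _ => a, rfl, rfl, Fin.elim0⟩⟩⟩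

variable {r} (s : α → Finset α) (hs : ∀ b c, c ∈ s b ↔ r b c)
include hs

lemma finite_relChain (a : α) (n : ℕ) (b : α) : Finite (RelChain r a n b) := by
  induction n generalizing b with
  | zero => infer_instance
  | succ n ih =>
    have := Fintype.subtype (s b) (hs b)
    exact Finite.of_equiv _ (relChainSuccEquiv r a n b).symm

theorem card_relChain_succ (a : α) (n : ℕ) (b : α) :
    Nat.card (RelChain r a (n + 1) b) = ∑ c ∈ s b, Nat.card (RelChain r a n c) := by
  have := Fintype.subtype (s b) (hs b)
  have := finite_relChain s hs a n
  rw [Nat.card_congr (relChainSuccEquiv r a n b), Nat.card_sigma,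
    sum_subtype (s b) (hs b) fun c => Nat.card (RelChain r a n c)]

end RelChain

lemma F_zero : F 0 = 1 := card_relChain_zero_self Covers 0

lemma F_eq_sum_F {lam : Ptn} {n : ℕ} (h : psize lam = n + 1) :
    F lam = ∑ mu ∈ (partitions n).filter (Covers lam), F mu := by
  have hs : ∀ b c, c ∈ (partitions (psize b - 1)).filter (Covers b) ↔ Covers b c := by
    refine fun b c => ⟨fun hc => (mem_filter.1 hc).2, fun hc => mem_filter.2 ⟨?_, hc⟩⟩
    exact mem_partitions.2 ⟨hc.2.1, by have := hc.2.2.2; omega⟩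
  change Nat.card (RelChain Covers 0 (psize lam) lam) = _
  rw [h, card_relChain_succ _ hs, h, Nat.add_sub_cancel]
  refine sum_congr rfl fun mu hmu => ?_
  rw [← (mem_partitions.1 (mem_filter.1 hmu).1).2]
  rfl

lemma schur_zero : schur 0 = 1 := by
  simp [schur, plen]

theorem sum_partitions_F_smul_schur (n : ℕ) :
    ∑ lam ∈ partitions n, F lam • schur lam = hsym 1 ^ n := by
  induction n with
  | zero => rw [partitions_zero, sum_singleton, F_zero, schur_zero, pow_zero, one_smul]
  | succ n ih =>
    calc ∑ lam ∈ partitions (n + 1), F lam • schur lam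
        = ∑ lam ∈ partitions (n + 1), ∑ mu ∈ (partitions n).filter (Covers lam),
            F mu • schur lam :=
          sum_congr rfl fun lam hlam => by
            rw [F_eq_sum_F (mem_partitions.1 hlam).2, sum_smul]
      _ = ∑ mu ∈ partitions n, ∑ lam ∈ (partitions (n + 1)).filter (Covers · mu),
            F mu • schur lam :=
          sum_comm' fun lam mu => by simp only [mem_filter]; tauto
      _ = ∑ mu ∈ partitions n, hsym 1 * (F mu • schur mu) :=
          sum_congr rfl fun mu hmu => by
            rw [← smul_sum, ← (mem_partitions.1 hmu).2, ← hsym_one_mul_schur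
              (mem_partitions.1 hmu).1, mul_smul_comm]
      _ = hsym 1 ^ (n + 1) := by rw [← mul_sum, ih, pow_succ']

end WAPpr

end

open WAPpr in
/-- `∑_{λ ⊢ n} F_λ s_λ = h_1^n`. -/
theorem sum_F_schur (n : ℕ) :
    ∑ᶠ (lam : Ptn) (_ : IsPtn lam ∧ psize lam = n), (F lam) • schur lam =
      (hsym 1) ^ n := by
  rw [finsum_cond_eq_sum_of_cond_iff _ fun {_} _ => mem_partitions.symm]
  exact sum_partitions_F_smul_schur n
end

section
/- For every partition λ of length r with degree vector (n_1,...,n_r), the Wronskian Appell polynomial A_λ = Wr[A_{n_1},...,A_{n_r}] / ∏_{i<j}(n_j − n_i) is a monic polynomial of degree |λ|. -/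
open scoped BigOperators

/-!
By the Appell property the entries of the Wronskian matrix are
`A_{n_i}^{(j)} = n_i (n_i - 1) ⋯ (n_i - j + 1) · A_{n_i - j}`, multiples of monic polynomials of
degree `n_i - j`. So every term of the Leibniz expansion has degree at most
`∑ n_i - ∑ j = |λ|`, and the coefficient of `X ^ |λ|` is the determinant of the falling factorials
`n_i (n_i - 1) ⋯ (n_i - j + 1)`. These are monic polynomials of degree `j` in `n_i`, so that
determinant is the Vandermonde determinant `∏_{i<j} (n_j - n_i)`, which is positive because the
degree vector is strictly increasing.
-/

namespace Polynomial

variable {R : Type*}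

section Semiring

variable [Semiring R] {p q : R[X]} {m n : ℕ} {a b : R}

/-- Unlike statements about `leadingCoeff`, this is preserved by sums and products even when the
coefficients involved vanish. -/
def HasTopCoeff (p : R[X]) (n : ℕ) (a : R) : Prop :=
  p.natDegree ≤ n ∧ p.coeff n = a

theorem hasTopCoeff_zero (n : ℕ) : HasTopCoeff (0 : R[X]) n 0 :=
  ⟨by simp, coeff_zero n⟩

theorem HasTopCoeff.mul (hp : HasTopCoeff p m a) (hq : HasTopCoeff q n b) :
    HasTopCoeff (p * q) (m + n) (a * b) :=
  ⟨natDegree_mul_le.trans (add_le_add hp.1 hq.1), by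
    rw [coeff_mul_add_eq_of_natDegree_le hp.1 hq.1, hp.2, hq.2]⟩

theorem HasTopCoeff.smul {S : Type*} [SMulZeroClass S R] (s : S) (hp : HasTopCoeff p n a) :
    HasTopCoeff (s • p) n (s • a) :=
  ⟨(natDegree_smul_le s p).trans hp.1, by rw [coeff_smul, hp.2]⟩

theorem HasTopCoeff.sum {ι : Type*} {s : Finset ι} {f : ι → R[X]} {c : ι → R}
    (h : ∀ i ∈ s, HasTopCoeff (f i) n (c i)) : HasTopCoeff (∑ i ∈ s, f i) n (∑ i ∈ s, c i) :=
  ⟨natDegree_sum_le_of_forall_le s f fun i hi => (h i hi).1, by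
    rw [finsetSum_coeff]; exact Finset.sum_congr rfl fun i hi => (h i hi).2⟩

theorem HasTopCoeff.natDegree_eq (hp : HasTopCoeff p n a) (ha : a ≠ 0) : p.natDegree = n :=
  hp.1.antisymm (le_natDegree_of_ne_zero (hp.2 ▸ ha))

theorem HasTopCoeff.monic [Nontrivial R] (hp : HasTopCoeff p n 1) : p.Monic := by
  rw [Monic, leadingCoeff, hp.natDegree_eq one_ne_zero, hp.2]

end Semiring

theorem HasTopCoeff.prod [CommSemiring R] {ι : Type*} {s : Finset ι} {f : ι → R[X]}
    {d : ι → ℕ} {c : ι → R} (h : ∀ i ∈ s, HasTopCoeff (f i) (d i) (c i)) :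
    HasTopCoeff (∏ i ∈ s, f i) (∑ i ∈ s, d i) (∏ i ∈ s, c i) := by
  induction s using Finset.cons_induction with
  | empty => exact ⟨by simp, by simp⟩
  | cons i s hi ih =>
    simp only [Finset.prod_cons, Finset.sum_cons]
    exact (h i (Finset.mem_cons_self i s)).mul (ih fun j hj => h j (Finset.mem_cons_of_mem hj))

theorem HasTopCoeff.det [CommRing R] {ι : Type*} [Fintype ι] [DecidableEq ι]
    {M : Matrix ι ι R[X]} {c : Matrix ι ι R} {n : ℕ}
    (h : ∀ σ : Equiv.Perm ι, HasTopCoeff (∏ i, M (σ i) i) n (∏ i, c (σ i) i)) :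
    HasTopCoeff M.det n c.det := by
  rw [Matrix.det_apply, Matrix.det_apply]
  exact HasTopCoeff.sum fun σ _ => (h σ).smul _

end Polynomial

namespace WAPpr

open Polynomial Finset

section Appell

variable {A : ℕ → ℝ[X]}

theorem IsAppell.derivative_eq (hA : IsAppell A) (n : ℕ) :
    derivative (A n) = (n : ℝ) • A (n - 1) := by
  rcases Nat.eq_zero_or_pos n with rfl | hn
  · simp [hA.1]
  · rw [hA.2 n hn, Nat.cast_smul_eq_nsmul]

theorem IsAppell.hasTopCoeff (hA : IsAppell A) (n : ℕ) : HasTopCoeff (A n) n 1 := by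
  induction n with
  | zero => rw [hA.1]; exact ⟨by simp, by simp⟩
  | succ n ih =>
    have hder := hA.derivative_eq (n + 1)
    rw [Nat.add_sub_cancel] at hder
    refine ⟨?_, ?_⟩
    · have hdeg := congrArg natDegree hder
      rw [natDegree_derivative] at hdeg
      have hle := (natDegree_smul_le ((n + 1 : ℕ) : ℝ) (A n)).trans ih.1
      omega
    · have hcoeff := congrArg (coeff · n) hder
      simp only [coeff_derivative, coeff_smul, ih.2, smul_eq_mul, mul_one] at hcoeff
      push_cast at hcoeff
      exact (mul_eq_right₀ (by positivity)).mp hcoeff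

theorem IsAppell.iterate_derivative (hA : IsAppell A) (j n : ℕ) :
    derivative^[j] (A n) = (n.descFactorial j : ℝ) • A (n - j) := by
  induction j with
  | zero => simp
  | succ j ih =>
    rw [Function.iterate_succ_apply', ih, derivative_smul, hA.derivative_eq, smul_smul,
      Nat.descFactorial_succ, Nat.sub_sub]
    push_cast
    ring_nf

theorem IsAppell.hasTopCoeff_wronskian (hA : IsAppell A) (r : ℕ) (d : ℕ → ℕ) :
    HasTopCoeff (wronskian r fun i => A (d i))
      (∑ i ∈ range r, d i - ∑ i ∈ range r, i)
      (Matrix.of fun i j : Fin r => ((d i).descFactorial j : ℝ)).det := by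
  refine HasTopCoeff.det fun σ => ?_
  simp only [Matrix.of_apply]
  by_cases hσ : ∀ j : Fin r, (j : ℕ) ≤ d (σ j)
  · have hdeg : ∑ j : Fin r, (d (σ j) - j) = ∑ i ∈ range r, d i - ∑ i ∈ range r, i := by
      rw [sum_tsub_distrib _ fun j _ => hσ j, Equiv.sum_comp σ fun j : Fin r => d j,
        Fin.sum_univ_eq_sum_range d, Fin.sum_univ_eq_sum_range (fun i => i)]
    rw [← hdeg]
    refine HasTopCoeff.prod fun j _ => ?_
    rw [hA.iterate_derivative]
    simpa using (hA.hasTopCoeff _).smul ((d (σ j)).descFactorial j : ℝ)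
  · push Not at hσ
    obtain ⟨j, hj⟩ := hσ
    have hzero : ((d (σ j)).descFactorial j : ℝ) = 0 := by
      exact_mod_cast Nat.descFactorial_eq_zero_iff_lt.mpr hj
    rw [prod_eq_zero (mem_univ j) (by rw [hA.iterate_derivative, hzero, zero_smul]),
      prod_eq_zero (mem_univ j) hzero]
    exact hasTopCoeff_zero _

end Appell

theorem det_descFactorial_eq_det_vandermonde {R : Type*} [CommRing R] [IsDomain R] {r : ℕ}
    (v : Fin r → ℕ) :
    (Matrix.of fun i j : Fin r => ((v i).descFactorial j : R)).det =
      (Matrix.vandermonde fun i => (v i : R)).det := by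
  rw [Matrix.det_eval_matrixOfPolynomials_eq_det_vandermonde _ (fun j => descPochhammer R j)
    (fun j => descPochhammer_natDegree R j) (fun j => monic_descPochhammer R j)]
  simp only [descPochhammer_eval_eq_descFactorial]

theorem prod_filter_lt_eq_prod_Ioi {M : Type*} [CommMonoid M] (r : ℕ) (g : ℕ → ℕ → M) :
    ∏ p ∈ (range r ×ˢ range r).filter (fun p => p.1 < p.2), g p.1 p.2
      = ∏ i : Fin r, ∏ j ∈ Ioi i, g i j := by
  rw [prod_filter, prod_product, ← Fin.prod_univ_eq_prod_range]
  refine prod_congr rfl fun i _ => ?_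
  rw [← Fin.prod_univ_eq_prod_range (fun b => if (i : ℕ) < b then g i b else 1), ← prod_filter]
  refine prod_congr ?_ fun j _ => rfl
  ext j
  simp only [mem_filter, mem_univ, true_and, mem_Ioi, Fin.lt_def]

theorem vand_eq_det_vandermonde (lam : Ptn) :
    vand lam = (Matrix.vandermonde fun i : Fin (plen lam) => (degv lam i : ℝ)).det := by
  rw [Matrix.det_vandermonde]
  exact prod_filter_lt_eq_prod_Ioi (plen lam) fun a b => (degv lam b : ℝ) - degv lam a

namespace IsPtn

variable {lam : Ptn}

theorem support_subset_range (h : IsPtn lam) : lam.support ⊆ range (plen lam) := by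
  intro a ha
  have hsub : range (a + 1) ⊆ lam.support := fun b hb => by
    rw [mem_range] at hb
    rw [Finsupp.mem_support_iff] at ha ⊢
    have := h (Nat.lt_succ_iff.mp hb)
    omega
  simpa [plen] using card_le_card hsub

theorem psize_eq_sum (h : IsPtn lam) : psize lam = ∑ i ∈ range (plen lam), lam i :=
  Finsupp.sum_of_support_subset lam h.support_subset_range _ fun _ _ => rfl

theorem sum_degv (h : IsPtn lam) :
    ∑ i ∈ range (plen lam), degv lam i = psize lam + ∑ i ∈ range (plen lam), i := by
  simp only [degv]
  rw [sum_add_distrib, sum_range_reflect (fun i => lam i), h.psize_eq_sum]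

theorem strictMono_degv (h : IsPtn lam) : StrictMono (degv lam) := fun a b hab => by
  have := h (show plen lam - 1 - b ≤ plen lam - 1 - a by omega)
  simp only [degv]
  omega

theorem vand_pos (h : IsPtn lam) : 0 < vand lam :=
  prod_pos fun _ hp => sub_pos.mpr <| Nat.cast_lt.mpr <|
    h.strictMono_degv (mem_filter.mp hp).2

end IsPtn

end WAPpr

open WAPpr in
/-- the Wronskian Appell polynomial `A_λ` is monic of
degree `|λ|`. -/
theorem wap_monic (A : ℕ → Polynomial ℝ) (hA : IsAppell A) (lam : Ptn)
    (h : IsPtn lam) :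
    (wap A lam).Monic ∧ (wap A lam).degree = psize lam := by
  have hW : Polynomial.HasTopCoeff (wronskian (plen lam) fun i => A (degv lam i))
      (psize lam) (vand lam) := by
    have := hA.hasTopCoeff_wronskian (plen lam) (degv lam)
    rwa [h.sum_degv, Nat.add_sub_cancel, det_descFactorial_eq_det_vandermonde,
      ← vand_eq_det_vandermonde] at this
  have hwap : Polynomial.HasTopCoeff (wap A lam) (psize lam) 1 := by
    have := hW.smul (vand lam)⁻¹
    rwa [smul_eq_mul, inv_mul_cancel₀ h.vand_pos.ne'] at this
  refine ⟨hwap.monic, ?_⟩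
  rw [Polynomial.degree_eq_natDegree hwap.monic.ne_zero, hwap.natDegree_eq one_ne_zero]
end
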